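/- arXiv:2504.02309 — 3 statements merged into one kernel-verified Lean document; each statement's English description precedes it below -/
import Mathlib

section
/- For any positive integers m, n with n ≥ 2, any 1 ≤ i ≤ m, and any fixed subset S of the n-th column of K_m × P_n with |S| = i, the number f of connected sets of K_m × P_n containing at least one vertex in each column and whose intersection with the n-th column equals S satisfies the recurrence f_{m,n}^i = Σ_{j=1}^{m-i} (C(m,j) - C(m-i,j)) · f_{m,n-1}^j + Σ_{j=m-i+1}^{m} C(m,j) · f_{m,n-1}^j, where f_{m,n}^i depends only on i (and not on the choice of S) and f_{m,1}^i = 1 for all i. -/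
open SimpleGraph Matrix

/-- The grid graph P_m × P_n on vertex set Fin m × Fin n. -/
def gridG (m n : ℕ) : SimpleGraph (Fin m × Fin n) :=
  SimpleGraph.fromRel (fun v w =>
    (v.2 = w.2 ∧ (v.1 : ℕ) + 1 = (w.1 : ℕ)) ∨ (v.1 = w.1 ∧ (v.2 : ℕ) + 1 = (w.2 : ℕ)))

/-- The graph K_m × P_n on vertex set Fin m × Fin n. -/
def compG (m n : ℕ) : SimpleGraph (Fin m × Fin n) :=
  SimpleGraph.fromRel (fun v w =>
    (v.2 = w.2 ∧ v.1 ≠ w.1) ∨ (v.1 = w.1 ∧ (v.2 : ℕ) + 1 = (w.2 : ℕ)))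

/-- A connected set of a graph: a nonempty vertex subset inducing a connected subgraph. -/
def IsConnSet {V : Type} (G : SimpleGraph V) (C : Finset V) : Prop :=
  (C : Set V).Nonempty ∧ (G.induce (C : Set V)).Connected

/-- N(G): the number of connected sets of G. -/
noncomputable def NconnSets (V : Type) [Fintype V] (G : SimpleGraph V) : ℕ :=
  Nat.card {C : Finset V // IsConnSet G C}

/-- Number of connected sets of K_m × P_n meeting every column whose intersection
with the last column is { (i, n-1) : i ∈ S }. -/
noncomputable def Fcnt (m n : ℕ) (S : Finset (Fin m)) : ℕ :=
  Nat.card {C : Finset (Fin m × Fin n) //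
    IsConnSet (compG m n) C ∧ (∀ j : Fin n, ∃ i : Fin m, (i, j) ∈ C) ∧
      ∀ (i : Fin m) (j : Fin n), (j : ℕ) = n - 1 → ((i, j) ∈ C ↔ i ∈ S)}

/-- A canonical subset of Fin m of cardinality min j m. -/
def canon (m j : ℕ) : Finset (Fin m) :=
  Finset.univ.filter (fun a : Fin m => (a : ℕ) < j)

/-!
Removing the last column of a connected set `C` of `K_m × P_(k+2)` that meets every column leaves a
connected set of `K_m × P_(k+1)` meeting every column: collapsing the last column onto a vertex of
column `k` maps edges to edges or to pairs inside the clique of column `k`. Its last column `T`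
meets the last column `S` of `C`, since some edge joins the two columns and such edges are
horizontal. Conversely, any such set whose last column meets `S` extends uniquely, by `S`. So
`f(S) = ∑_{T ∩ S ≠ ∅} f(T)`, which by induction on the number of columns depends only on `|S|`,
and exactly `C(m, j) - C(m - |S|, j)` sets `T` of size `j` meet `S`.
-/

open Finset

theorem SimpleGraph.Preconnected.of_surjective_of_adj_reachable {V W : Type*}
    {G : SimpleGraph V} {H : SimpleGraph W} (hG : G.Preconnected) (f : V → W)
    (hf : Function.Surjective f) (hadj : ∀ ⦃a b⦄, G.Adj a b → H.Reachable (f a) (f b)) :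
    H.Preconnected := by
  have hreach : ∀ {a b}, G.Reachable a b → H.Reachable (f a) (f b) := by
    rintro a b ⟨p⟩
    induction p with
    | nil => rfl
    | cons h _ ih => exact (hadj h).trans ih
  intro x y
  obtain ⟨a, rfl⟩ := hf x
  obtain ⟨b, rfl⟩ := hf y
  exact hreach (hG a b)

theorem Nat.card_subtype_and_eq_sum_card_fiber {α β : Type*} [Fintype α] [Fintype β]
    [DecidableEq β] (p : α → Prop) (q : β → Prop) [DecidablePred q] (f : α → β) :
    Nat.card {a // p a ∧ q (f a)} = ∑ b : β with q b, Nat.card {a // p a ∧ f a = b} := by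
  classical
  simp only [Nat.card_eq_fintype_card, Fintype.card_subtype]
  rw [card_eq_sum_card_fiberwise (f := f) (t := {b | q b}) fun a ha => by simp_all]
  refine sum_congr rfl fun b hb => ?_
  rw [filter_filter]
  refine congrArg card (filter_congr fun a _ => ⟨fun h => ⟨h.1.1, h.2⟩, fun h => ?_⟩)
  exact ⟨⟨h.1, h.2 ▸ (mem_filter.mp hb).2⟩, h.2⟩

theorem Finset.card_powersetCard_not_disjoint {α : Type*} [Fintype α] [DecidableEq α]
    (S : Finset α) (j : ℕ) :
    #{T ∈ powersetCard j univ | ¬Disjoint T S} =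
      (Fintype.card α).choose j - (Fintype.card α - #S).choose j := by
  have hdisj : {T ∈ powersetCard j (univ : Finset α) | Disjoint T S} = powersetCard j Sᶜ := by
    ext T
    simp [mem_powersetCard, subset_compl_iff_disjoint_right, and_comm]
  have := card_filter_add_card_filter_not (s := powersetCard j (univ : Finset α))
    (fun T => Disjoint T S)
  rw [hdisj, card_powersetCard, card_powersetCard, card_compl, card_univ] at this
  omega

theorem Finset.sum_not_disjoint_eq_sum_choose {α M : Type*} [Fintype α] [DecidableEq α]
    [AddCommMonoid M] (S : Finset α) (g : ℕ → M) :
    ∑ T : Finset α with ¬Disjoint T S, g #T =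
      ∑ j ∈ Icc 1 (Fintype.card α),
        ((Fintype.card α).choose j - (Fintype.card α - #S).choose j) • g j := by
  have hcard (T : Finset α) (hT : T ∈ ({T | ¬Disjoint T S} : Finset (Finset α))) :
      #T ∈ Icc 1 (Fintype.card α) := by
    obtain ⟨a, haT, -⟩ := not_disjoint_iff.mp (mem_filter.mp hT).2
    exact mem_Icc.mpr ⟨card_pos.mpr ⟨a, haT⟩, card_le_univ T⟩
  rw [← sum_fiberwise_of_maps_to hcard]
  refine sum_congr rfl fun j _ => ?_
  have hfiber : {T ∈ ({T | ¬Disjoint T S} : Finset (Finset α)) | #T = j} =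
      {T ∈ powersetCard j (univ : Finset α) | ¬Disjoint T S} := by
    ext T
    simp [and_comm]
  rw [← card_powersetCard_not_disjoint, ← sum_const, hfiber]
  exact sum_congr rfl fun T hT => by rw [mem_powersetCard_univ.mp (mem_filter.mp hT).1]

namespace compG

variable {m n k : ℕ}

theorem adj_iff {a b : Fin m} {j j' : Fin n} :
    (compG m n).Adj (a, j) (b, j') ↔
      (j = j' ∧ a ≠ b) ∨ (a = b ∧ ((j : ℕ) + 1 = j' ∨ (j' : ℕ) + 1 = j)) := by
  simp only [compG, fromRel_adj, ne_eq, Prod.mk.injEq, Fin.ext_iff]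
  grind

theorem adj_castSucc_iff {a b : Fin m} {j j' : Fin n} :
    (compG m (n + 1)).Adj (a, j.castSucc) (b, j'.castSucc) ↔ (compG m n).Adj (a, j) (b, j') := by
  simp [adj_iff]

theorem adj_last_castSucc_iff {a b : Fin m} {j : Fin (k + 1)} :
    (compG m (k + 2)).Adj (a, Fin.last (k + 1)) (b, j.castSucc) ↔ a = b ∧ j = Fin.last k := by
  simp only [adj_iff, Fin.ext_iff, Fin.val_last, Fin.val_castSucc]
  omega

def castSuccEmb : compG m n ↪g compG m (n + 1) where
  toFun p := (p.1, p.2.castSucc)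
  inj' _ _ h := by simpa [Prod.ext_iff] using h
  map_rel_iff' := adj_castSucc_iff

@[simp]
theorem castSuccEmb_apply (p : Fin m × Fin n) : castSuccEmb p = (p.1, p.2.castSucc) := rfl

theorem reachable_induce_of_snd_eq {s : Set (Fin m × Fin n)} {u v : s} (h : u.1.2 = v.1.2) :
    ((compG m n).induce s).Reachable u v := by
  obtain rfl | huv := eq_or_ne u v
  · rfl
  obtain ⟨⟨a, j⟩, hu⟩ := u
  obtain ⟨⟨b, j'⟩, hv⟩ := v
  obtain rfl : j = j' := h
  exact Adj.reachable (adj_iff.mpr (Or.inl ⟨rfl, fun hab => huv (by subst hab; rfl)⟩))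

end compG

section Columns

variable {m n k : ℕ}

def column (C : Finset (Fin m × Fin n)) (j : Fin n) : Finset (Fin m) := {a | (a, j) ∈ C}

@[simp]
theorem mem_column {C : Finset (Fin m × Fin n)} {j : Fin n} {a : Fin m} :
    a ∈ column C j ↔ (a, j) ∈ C := by
  simp [column]

def initColumns (C : Finset (Fin m × Fin (n + 1))) : Finset (Fin m × Fin n) :=
  {p | compG.castSuccEmb p ∈ C}

def snocColumn (C : Finset (Fin m × Fin n)) (S : Finset (Fin m)) : Finset (Fin m × Fin (n + 1)) :=
  C.map compG.castSuccEmb.toEmbedding ∪ S ×ˢ {Fin.last n}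

@[simp]
theorem mem_initColumns {C : Finset (Fin m × Fin (n + 1))} {a : Fin m} {j : Fin n} :
    (a, j) ∈ initColumns C ↔ (a, j.castSucc) ∈ C := by
  unfold initColumns
  rw [Finset.mem_filter]
  simp

@[simp]
theorem mem_snocColumn_castSucc {C : Finset (Fin m × Fin n)} {S : Finset (Fin m)} {a : Fin m}
    {j : Fin n} : (a, j.castSucc) ∈ snocColumn C S ↔ (a, j) ∈ C := by
  simp [snocColumn, (Fin.castSucc_ne_last _).symm]

@[simp]
theorem mem_snocColumn_last {C : Finset (Fin m × Fin n)} {S : Finset (Fin m)} {a : Fin m} :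
    (a, Fin.last n) ∈ snocColumn C S ↔ a ∈ S := by
  simp [snocColumn]

theorem initColumns_snocColumn (C : Finset (Fin m × Fin n)) (S : Finset (Fin m)) :
    initColumns (snocColumn C S) = C := by
  ext ⟨a, j⟩
  simp

theorem snocColumn_initColumns {C : Finset (Fin m × Fin (n + 1))} :
    snocColumn (initColumns C) (column C (Fin.last n)) = C := by
  ext ⟨a, j⟩
  cases j using Fin.lastCases <;> simp

theorem column_snocColumn_last (C : Finset (Fin m × Fin n)) (S : Finset (Fin m)) :
    column (snocColumn C S) (Fin.last n) = S := by
  ext a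
  simp

theorem column_initColumns (C : Finset (Fin m × Fin (n + 1))) (j : Fin n) :
    column (initColumns C) j = column C j.castSucc := by
  ext a
  simp

theorem column_snocColumn_castSucc (C : Finset (Fin m × Fin n)) (S : Finset (Fin m)) (j : Fin n) :
    column (snocColumn C S) j.castSucc = column C j := by
  ext a
  simp

end Columns

section Connectivity

variable {m k : ℕ}

open compG

theorem isConnSet_initColumns {C : Finset (Fin m × Fin (k + 2))} {c : Fin m}
    (hC : IsConnSet (compG m (k + 2)) C) (hc : (c, (Fin.last k).castSucc) ∈ C) :
    IsConnSet (compG m (k + 1)) (initColumns C) := by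
  let r : Fin m × Fin (k + 2) → Fin m × Fin (k + 1) := fun p =>
    Fin.lastCases (c, Fin.last k) (fun j => (p.1, j)) p.2
  have hr_castSucc (a : Fin m) (j : Fin (k + 1)) : r (a, j.castSucc) = (a, j) := by simp [r]
  have hr_last (a : Fin m) : r (a, Fin.last (k + 1)) = (c, Fin.last k) := by simp [r]
  have hr_mem (p : Fin m × Fin (k + 2)) (hp : p ∈ C) : r p ∈ initColumns C := by
    obtain ⟨a, j⟩ := p
    cases j using Fin.lastCases <;> simp_all
  have hc' : (c, Fin.last k) ∈ initColumns C := by simpa using hc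
  refine ⟨⟨_, hc'⟩, (connected_iff _).mpr ⟨?_, ⟨⟨_, hc'⟩⟩⟩⟩
  refine hC.2.preconnected.of_surjective_of_adj_reachable (fun p => ⟨r p, hr_mem p p.2⟩) ?_ ?_
  · rintro ⟨⟨a, j⟩, hp⟩
    exact ⟨⟨castSuccEmb (a, j), by simpa using hp⟩, Subtype.ext (hr_castSucc a j)⟩
  · rintro ⟨⟨a, j⟩, hp⟩ ⟨⟨b, j'⟩, hq⟩ hadj
    rw [induce_adj] at hadj
    cases j using Fin.lastCases <;> cases j' using Fin.lastCases
    · exact reachable_induce_of_snd_eq (by simp [hr_last])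
    · obtain ⟨-, rfl⟩ := adj_last_castSucc_iff.mp hadj
      exact reachable_induce_of_snd_eq (by simp [hr_last, hr_castSucc])
    · obtain ⟨-, rfl⟩ := adj_last_castSucc_iff.mp hadj.symm
      exact reachable_induce_of_snd_eq (by simp [hr_last, hr_castSucc])
    · refine Adj.reachable ?_
      simpa [induce_adj, hr_castSucc] using adj_castSucc_iff.mp hadj

theorem not_disjoint_column_castSucc_last {C : Finset (Fin m × Fin (k + 2))}
    (hC : IsConnSet (compG m (k + 2)) C) {a b : Fin m} {j : Fin (k + 1)}
    (ha : (a, Fin.last (k + 1)) ∈ C) (hb : (b, j.castSucc) ∈ C) :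
    ¬Disjoint (column C (Fin.last k).castSucc) (column C (Fin.last (k + 1))) := by
  obtain ⟨p⟩ := hC.2.preconnected ⟨_, ha⟩ ⟨_, hb⟩
  obtain ⟨⟨⟨⟨⟨a', j₁⟩, h₁⟩, ⟨⟨b', j₂⟩, h₂⟩⟩, hadj⟩, -, hj₁, hj₂⟩ :=
    p.exists_boundary_dart {v | v.1.2 = Fin.last (k + 1)} rfl (by simp [Fin.castSucc_ne_last])
  obtain rfl : j₁ = Fin.last (k + 1) := hj₁
  obtain ⟨j₂, rfl⟩ := Fin.exists_castSucc_eq.mpr hj₂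
  obtain ⟨rfl, rfl⟩ := adj_last_castSucc_iff.mp hadj
  exact not_disjoint_iff.mpr ⟨a', by simpa using h₂, by simpa using h₁⟩

theorem isConnSet_snocColumn {C : Finset (Fin m × Fin (k + 1))} {S : Finset (Fin m)} {a : Fin m}
    (hC : IsConnSet (compG m (k + 1)) C) (haC : (a, Fin.last k) ∈ C) (haS : a ∈ S) :
    IsConnSet (compG m (k + 2)) (snocColumn C S) := by
  have hcoe : (snocColumn C S : Set (Fin m × Fin (k + 2))) =
      castSuccEmb '' C ∪ (S ×ˢ {Fin.last (k + 1)} : Finset _) := by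
    simp [snocColumn]
  refine ⟨⟨(a, Fin.last (k + 1)), by simpa using haS⟩, ?_⟩
  rw [hcoe]
  refine connected_induce_union (v := castSuccEmb (a, Fin.last k))
    (w := (a, Fin.last (k + 1))) ?_ ?_ ⟨_, haC, rfl⟩ (by simpa using haS) (by simp [adj_iff])
  · exact hC.2.preconnected.of_surjective_of_adj_reachable _ Set.imageFactorization_surjective
      fun _ _ h => Adj.reachable (castSuccEmb.map_adj_iff.mpr h)
  · rintro ⟨u, hu⟩ ⟨v, hv⟩
    simp only [coe_product, coe_singleton, Set.mem_prod, Set.mem_singleton_iff] at hu hv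
    exact reachable_induce_of_snd_eq (hu.2.trans hv.2.symm)

end Connectivity

section Counting

variable {m k : ℕ}

def IsColumnConnSet (m n : ℕ) (C : Finset (Fin m × Fin n)) : Prop :=
  IsConnSet (compG m n) C ∧ ∀ j : Fin n, ∃ i : Fin m, (i, j) ∈ C

theorem Fcnt_succ (m k : ℕ) (S : Finset (Fin m)) :
    Fcnt m (k + 1) S =
      Nat.card {C // IsColumnConnSet m (k + 1) C ∧ column C (Fin.last k) = S} := by
  refine Nat.card_congr (Equiv.subtypeEquivRight fun C => ?_)
  rw [IsColumnConnSet, and_assoc]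
  refine and_congr_right' (and_congr_right' ⟨fun h => ?_, ?_⟩)
  · ext a
    simpa using h a (Fin.last k) (by simp)
  · rintro rfl a j hj
    obtain rfl : j = Fin.last k := Fin.ext (by simpa using hj)
    simp

theorem isColumnConnSet_initColumns {C : Finset (Fin m × Fin (k + 2))}
    (hC : IsColumnConnSet m (k + 2) C) : IsColumnConnSet m (k + 1) (initColumns C) := by
  obtain ⟨c, hc⟩ := hC.2 (Fin.last k).castSucc
  exact ⟨isConnSet_initColumns hC.1 hc, fun j => by simpa using hC.2 j.castSucc⟩

theorem IsColumnConnSet.not_disjoint_column_last {C : Finset (Fin m × Fin (k + 2))}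
    (hC : IsColumnConnSet m (k + 2) C) :
    ¬Disjoint (column (initColumns C) (Fin.last k)) (column C (Fin.last (k + 1))) := by
  obtain ⟨a, ha⟩ := hC.2 (Fin.last (k + 1))
  obtain ⟨b, hb⟩ := hC.2 (0 : Fin (k + 1)).castSucc
  rw [column_initColumns]
  exact not_disjoint_column_castSucc_last hC.1 ha hb

theorem isColumnConnSet_snocColumn {C : Finset (Fin m × Fin (k + 1))} {S : Finset (Fin m)}
    (hC : IsColumnConnSet m (k + 1) C) (hS : ¬Disjoint (column C (Fin.last k)) S) :
    IsColumnConnSet m (k + 2) (snocColumn C S) := by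
  obtain ⟨a, haC, haS⟩ := not_disjoint_iff.mp hS
  refine ⟨isConnSet_snocColumn hC.1 (by simpa using haC) haS, fun j => ?_⟩
  cases j using Fin.lastCases
  · exact ⟨a, by simpa using haS⟩
  · simpa using hC.2 _

theorem Fcnt_succ_succ (S : Finset (Fin m)) :
    Fcnt m (k + 2) S = ∑ T : Finset (Fin m) with ¬Disjoint T S, Fcnt m (k + 1) T := by
  let e : {C // IsColumnConnSet m (k + 2) C ∧ column C (Fin.last (k + 1)) = S} ≃
      {C // IsColumnConnSet m (k + 1) C ∧ ¬Disjoint (column C (Fin.last k)) S} :=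
    { toFun C := ⟨initColumns C.1, isColumnConnSet_initColumns C.2.1,
        by obtain ⟨C, hC, rfl⟩ := C; exact hC.not_disjoint_column_last⟩
      invFun C := ⟨snocColumn C.1 S, isColumnConnSet_snocColumn C.2.1 C.2.2,
        column_snocColumn_last _ _⟩
      left_inv C := Subtype.ext (by obtain ⟨C, -, rfl⟩ := C; exact snocColumn_initColumns)
      right_inv C := Subtype.ext (initColumns_snocColumn _ _) }
  rw [Fcnt_succ, Nat.card_congr e, Nat.card_subtype_and_eq_sum_card_fiber _ (¬Disjoint · S)
    (column · (Fin.last k))]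
  simp only [Fcnt_succ]

theorem Fcnt_one {S : Finset (Fin m)} (hS : S.Nonempty) : Fcnt m 1 S = 1 := by
  rw [Fcnt_succ m 0, Nat.card_eq_one_iff_exists]
  have : Subsingleton (Fin (0 + 1)) := Fin.subsingleton_one
  have hne : ((S ×ˢ univ : Finset (Fin m × Fin 1)) : Set (Fin m × Fin 1)).Nonempty := by
    simpa using hS
  refine ⟨⟨S ×ˢ univ, ⟨⟨hne, (connected_iff _).mpr ⟨?_, hne.to_subtype⟩⟩, ?_⟩, ?_⟩, ?_⟩
  · exact fun u v => compG.reachable_induce_of_snd_eq (Subsingleton.elim _ _)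
  · obtain ⟨a, ha⟩ := hS
    exact fun j => ⟨a, mem_product.mpr ⟨ha, mem_univ j⟩⟩
  · ext a
    simp
  · rintro ⟨C, -, rfl⟩
    refine Subtype.ext ?_
    ext ⟨a, j⟩
    obtain rfl := Subsingleton.elim j (Fin.last 0)
    simp

theorem Fcnt_succ_succ_eq_sum_choose (S : Finset (Fin m))
    (h : ∀ T : Finset (Fin m), T.Nonempty → Fcnt m (k + 1) T = Fcnt m (k + 1) (canon m #T)) :
    Fcnt m (k + 2) S =
      ∑ j ∈ Icc 1 m, (m.choose j - (m - #S).choose j) * Fcnt m (k + 1) (canon m j) := by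
  rw [Fcnt_succ_succ]
  calc ∑ T : Finset (Fin m) with ¬Disjoint T S, Fcnt m (k + 1) T
      = ∑ T : Finset (Fin m) with ¬Disjoint T S, Fcnt m (k + 1) (canon m #T) :=
        sum_congr rfl fun T hT =>
          h T ((not_disjoint_iff_nonempty_inter.mp (mem_filter.mp hT).2).mono inter_subset_left)
    _ = _ := by
        simpa using sum_not_disjoint_eq_sum_choose S fun j => Fcnt m (k + 1) (canon m j)

theorem Fcnt_eq_Fcnt_canon_card (k : ℕ) {S : Finset (Fin m)} (hS : S.Nonempty) :
    Fcnt m (k + 1) S = Fcnt m (k + 1) (canon m #S) := by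
  induction k generalizing S with
  | zero =>
    have hcanon : (canon m #S).Nonempty := by
      rw [← card_pos, canon, Fin.card_filter_val_lt, lt_min_iff]
      exact ⟨hS.choose.pos, card_pos.mpr hS⟩
    rw [Fcnt_one hS, Fcnt_one hcanon]
  | succ k ih =>
    have hS_le : #S ≤ m := (card_le_univ S).trans_eq (Fintype.card_fin m)
    rw [Fcnt_succ_succ_eq_sum_choose S fun T => ih, Fcnt_succ_succ_eq_sum_choose _ fun T => ih,
      canon, Fin.card_filter_val_lt, min_eq_right hS_le]

end Counting

theorem f_recurrence_general (m n i : ℕ) (hn : 2 ≤ n)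
    (S : Finset (Fin m)) (hS : S.card = i) :
    (Fcnt m n S =
      (∑ j ∈ Finset.Icc 1 (m - i),
          (Nat.choose m j - Nat.choose (m - i) j) * Fcnt m (n - 1) (canon m j)) +
        ∑ j ∈ Finset.Icc (m - i + 1) m, Nat.choose m j * Fcnt m (n - 1) (canon m j)) ∧
    (∀ i' : ℕ, 1 ≤ i' → i' ≤ m → ∀ S' : Finset (Fin m), S'.card = i' → Fcnt m 1 S' = 1) := by
  obtain ⟨k, rfl⟩ : ∃ k, n = k + 2 := ⟨n - 2, by omega⟩
  rw [show k + 2 - 1 = k + 1 by omega]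
  refine ⟨?_, fun i' hi' _ S' hS' => Fcnt_one (card_pos.mp (hS' ▸ hi'))⟩
  have hIcc (a : ℕ) : Icc 1 a = Ioc 0 a := Icc_add_one_left_eq_Ioc 0 a
  rw [Fcnt_succ_succ_eq_sum_choose S fun T hT => Fcnt_eq_Fcnt_canon_card k hT, hS, hIcc, hIcc,
    Icc_add_one_left_eq_Ioc, ← sum_Ioc_consecutive _ (Nat.zero_le (m - i)) (Nat.sub_le m i)]
  refine congrArg _ (sum_congr rfl fun j hj => ?_)
  rw [Nat.choose_eq_zero_of_lt (mem_Ioc.mp hj).1, Nat.sub_zero]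

theorem f_recurrence (m n i : ℕ) (hm : 0 < m) (hn : 2 ≤ n) (hi1 : 1 ≤ i) (him : i ≤ m)
    (S : Finset (Fin m)) (hS : S.card = i) :
    (Fcnt m n S =
      (∑ j ∈ Finset.Icc 1 (m - i),
          (Nat.choose m j - Nat.choose (m - i) j) * Fcnt m (n - 1) (canon m j)) +
        ∑ j ∈ Finset.Icc (m - i + 1) m, Nat.choose m j * Fcnt m (n - 1) (canon m j)) ∧
    (∀ i' : ℕ, 1 ≤ i' → i' ≤ m → ∀ S' : Finset (Fin m), S'.card = i' → Fcnt m 1 S' = 1) :=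
  f_recurrence_general m n i hn S hS
end

section
/- For n ≥ 2 and any subset S of the n-th column of K_m × P_n with |S| = i, the number of connected sets containing at least one vertex of every column and meeting the n-th column exactly in S is independent of the choice of S with |S| = i. -/
open SimpleGraph Matrix

/-!
Permuting the rows of `K_m × P_n` is a graph automorphism that maps every column to itself.
It therefore carries the connected sets counted by `Fcnt m n S` bijectively onto those counted
by `Fcnt m n (σ S)`, and any two subsets of `Fin m` of the same size differ by a permutation.
-/

theorem isConnSet_map_iso_iff {V W : Type} {G : SimpleGraph V} {H : SimpleGraph W} (φ : G ≃g H)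
    (C : Finset V) : IsConnSet H (C.map φ.toEquiv.toEmbedding) ↔ IsConnSet G C := by
  have hbij : Set.BijOn φ C (C.map φ.toEquiv.toEmbedding) := by
    simpa using φ.injective.injOn.bijOn_image (s := (C : Set V))
  simp only [IsConnSet, Finset.coe_nonempty, Finset.map_nonempty]
  exact and_congr_right' (φ.induce hbij).connected_iff.symm

def compG.rowPermIso (m n : ℕ) (σ : Equiv.Perm (Fin m)) : compG m n ≃g compG m n where
  toEquiv := σ.prodCongr (Equiv.refl (Fin n))
  map_rel_iff' := by
    simp only [compG, fromRel_adj, Equiv.prodCongr_apply, Prod.map, Equiv.refl_apply, ne_eq,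
      EmbeddingLike.apply_eq_iff_eq, Prod.ext_iff, implies_true]

theorem Fcnt_map_perm (m n : ℕ) (σ : Equiv.Perm (Fin m)) (S : Finset (Fin m)) :
    Fcnt m n (S.map σ.toEmbedding) = Fcnt m n S := by
  set φ := compG.rowPermIso m n σ
  have hmem : ∀ (C : Finset (Fin m × Fin n)) i j,
      (i, j) ∈ C.map φ.toEquiv.toEmbedding ↔ (σ.symm i, j) ∈ C :=
    fun _ _ _ => Finset.mem_map_equiv
  refine (Nat.card_congr (φ.toEquiv.finsetCongr.subtypeEquiv fun C => ?_)).symm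
  simp only [Equiv.finsetCongr_apply, isConnSet_map_iso_iff, hmem, Finset.mem_map_equiv]
  refine and_congr_right' (and_congr ?_ ?_)
  · exact forall_congr' fun j => σ.symm.surjective.exists
  · exact (σ.symm.forall_congr_right).symm

theorem f_depends_only_on_card_general (m n : ℕ)
    (S T : Finset (Fin m)) (h : S.card = T.card) :
    Fcnt m n S = Fcnt m n T := by
  obtain ⟨σ, rfl⟩ := Equiv.Perm.exists_map_finset_eq S T h
  exact (Fcnt_map_perm m n σ S).symm

theorem f_depends_only_on_card (m n : ℕ) (hn : 2 ≤ n)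
    (S T : Finset (Fin m)) (h : S.card = T.card) :
    Fcnt m n S = Fcnt m n T :=
  f_depends_only_on_card_general m n S T h
end

section
/- Let C be a connected set of K_m × P_n (n ≥ 2) containing at least one vertex in each column, with S_n = C ∩ I_n. If some connected component of the subgraph of P_m × P_n induced by S_n is also a connected component of the subgraph of P_m × P_n induced by S_n ∪ (C ∩ I_{n-1}), then S_n is not a connected set of P_m × P_n and C is not a connected set of P_m × P_n. -/
/-!
Maximality of `A` in `Sn ∪ Tn1` means that no grid edge leaves `A` towards a vertex of `C` in the
last two columns. If `C` were grid-connected, walking inside `C` from `A` to a vertex of the first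
column would cross such an edge, since grid neighbours of the last column lie in the last two
columns. If `Sn` were grid-connected, it would equal `A`, and walking inside `C` in `K_m × P_n`
from `Sn` to the first column would cross an edge between a row's last two vertices, which is also
a grid edge. Either way `C ⊆ Sn`, although `C` meets the first column and `n ≥ 2`.
-/

open SimpleGraph Matrix

/-- A is a connected component (maximal connected subset) of the subgraph of G induced by X. -/
def IsCompOf {V : Type} (G : SimpleGraph V) (X A : Set V) : Prop :=
  A.Nonempty ∧ A ⊆ X ∧ (G.induce A).Connected ∧
    ∀ B : Set V, A ⊆ B → B ⊆ X → (G.induce B).Connected → B = A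

namespace SimpleGraph

variable {V : Type} {G : SimpleGraph V}

lemma subset_of_induce_connected_of_adj_closed {X A : Set V} (hX : (G.induce X).Connected)
    {a : V} (haX : a ∈ X) (haA : a ∈ A) (hclosed : ∀ u v, u ∈ A → v ∈ X → G.Adj u v → v ∈ A) :
    X ⊆ A := by
  intro b hbX
  by_contra hbA
  obtain ⟨w⟩ := hX ⟨a, haX⟩ ⟨b, hbX⟩
  obtain ⟨d, -, hd₁, hd₂⟩ := w.exists_boundary_dart {x : X | (x : V) ∈ A} haA hbA
  exact hd₂ (hclosed _ _ hd₁ d.snd.2 d.adj)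

end SimpleGraph

lemma IsCompOf.mem_of_adj {V : Type} {G : SimpleGraph V} {X A : Set V} (hA : IsCompOf G X A)
    {a b : V} (ha : a ∈ A) (hb : b ∈ X) (hab : G.Adj a b) : b ∈ A := by
  obtain ⟨-, hAX, hAconn, hAmax⟩ := hA
  have hconn : (G.induce (A ∪ {b})).Connected :=
    connected_induce_union hAconn.preconnected Preconnected.of_subsingleton ha rfl hab
  rw [← hAmax (A ∪ {b}) Set.subset_union_left (Set.union_subset hAX (by simpa)) hconn]
  exact Or.inr rfl

lemma gridG_adj_col {m n : ℕ} {u v : Fin m × Fin n} (h : (gridG m n).Adj u v) :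
    u.2 = v.2 ∨ (u.2 : ℕ) + 1 = v.2 ∨ (v.2 : ℕ) + 1 = u.2 := by
  rw [gridG, fromRel_adj] at h
  omega

lemma gridG_adj_of_compG_adj {m n : ℕ} {u v : Fin m × Fin n} (h : (compG m n).Adj u v)
    (hcol : u.2 ≠ v.2) : (gridG m n).Adj u v := by
  rw [compG, fromRel_adj] at h
  rw [gridG, fromRel_adj]
  grind

theorem component_obstruction (m n : ℕ) (hn : 2 ≤ n)
    (C : Finset (Fin m × Fin n)) (hC : IsConnSet (compG m n) C)
    (hcol : ∀ j : Fin n, ∃ i : Fin m, (i, j) ∈ C)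
    (Sn Tn1 : Set (Fin m × Fin n))
    (hSn : Sn = {v | v ∈ C ∧ (v.2 : ℕ) = n - 1})
    (hTn1 : Tn1 = {v | v ∈ C ∧ (v.2 : ℕ) = n - 2})
    (hcomp : ∃ A : Set (Fin m × Fin n),
      IsCompOf (gridG m n) Sn A ∧ IsCompOf (gridG m n) (Sn ∪ Tn1) A) :
    ¬ ((gridG m n).induce Sn).Connected ∧
      ¬ ((gridG m n).induce (C : Set (Fin m × Fin n))).Connected := by
  subst hSn hTn1
  obtain ⟨A, hA, hA'⟩ := hcomp
  obtain ⟨⟨a, haA⟩, hAS, -, hAmax⟩ := hA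
  have haC : a ∈ C := (hAS haA).1
  obtain ⟨i₀, hi₀⟩ := hcol ⟨0, by omega⟩
  have hC_not_sub : ¬ (C : Set _) ⊆ {v | v ∈ C ∧ (v.2 : ℕ) = n - 1} := fun h => by
    have := (h hi₀).2
    simp only at this
    omega
  refine ⟨fun hS => hC_not_sub ?_, fun hCg => hC_not_sub ?_⟩
  · have hSA := hAmax _ hAS le_rfl hS
    refine subset_of_induce_connected_of_adj_closed hC.2 haC (hAS haA) fun u v hu hv huv => ?_
    by_cases hsame : u.2 = v.2
    · exact ⟨hv, hsame ▸ hu.2⟩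
    · have hgrid := gridG_adj_of_compG_adj huv hsame
      have hv_col : (v.2 : ℕ) = n - 2 := by
        have := hu.2
        have := gridG_adj_col hgrid
        omega
      rw [hSA] at hu ⊢
      exact hA'.mem_of_adj hu (Or.inr ⟨hv, hv_col⟩) hgrid
  · refine (subset_of_induce_connected_of_adj_closed hCg haC haA
      fun u v hu hv huv => hA'.mem_of_adj hu ?_ huv).trans hAS
    have hu_col := (hAS hu).2
    have := gridG_adj_col huv
    by_cases hv_last : (v.2 : ℕ) = n - 1
    · exact Or.inl ⟨hv, hv_last⟩
    · exact Or.inr ⟨hv, by omega⟩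
end
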